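/- Let V be a vector configuration of rank r in a finite-dimensional real vector space E with dim E ≥ 1. For every integer s with 1 ≤ s ≤ r − 1 there exists a subfamily W of V of rank s such that disc(V) = disc(W) + disc(V/W). -/

import Mathlib

open scoped Classical

noncomputable section

variable {E : Type*} [AddCommGroup E] [Module ℝ E] {ι : Type*} [Fintype ι]

/-- Number of indices where the functional is positive. -/
def posCount (φ : E →ₗ[ℝ] ℝ) (V : ι → E) : ℕ :=
  (Finset.univ.filter fun i => 0 < φ (V i)).card

/-- Number of indices where the functional is negative. -/
def negCount (φ : E →ₗ[ℝ] ℝ) (V : ι → E) : ℕ :=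
  (Finset.univ.filter fun i => φ (V i) < 0).card

/-- Number of indices where the functional is nonpositive. -/
def nonposCount (φ : E →ₗ[ℝ] ℝ) (V : ι → E) : ℕ :=
  (Finset.univ.filter fun i => φ (V i) ≤ 0).card

/-- Dual codegree: minimum over nonzero functionals of `nonposCount`; by convention the
number of elements when the ambient space is zero-dimensional (trivial). -/
def codegStar (V : ι → E) : ℕ :=
  if Nontrivial E then
    sInf {k | ∃ φ : E →ₗ[ℝ] ℝ, φ ≠ 0 ∧ nonposCount φ V = k}
  else Fintype.card ι

/-- Rank of a configuration: dimension of the linear span. -/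
def confRank (V : ι → E) : ℕ :=
  Module.finrank ℝ (Submodule.span ℝ (Set.range V))

/-- Dual degree: maximum over nonzero functionals of `posCount`, minus the rank. -/
def degStar (V : ι → E) : ℤ :=
  (sSup {k | ∃ φ : E →ₗ[ℝ] ℝ, φ ≠ 0 ∧ posCount φ V = k} : ℕ) - (confRank V : ℤ)

/-- Covector discrepancy: maximum over all functionals of `|φ⁺(V) − φ⁻(V)|`. -/
def disc (V : ι → E) : ℕ :=
  sSup {k | ∃ φ : E →ₗ[ℝ] ℝ, k = ((posCount φ V : ℤ) - (negCount φ V : ℤ)).natAbs}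

/-- The subfamily of `V` indexed by `S`. -/
def subfam (V : ι → E) (S : Finset ι) : {i // i ∈ S} → E := fun i => V i.1

/-- The contraction `V/W`, where `W = V|S`: images of the remaining vectors in the
quotient by the span of `W`. -/
def contract (V : ι → E) (S : Finset ι) :
    {i // i ∉ S} → E ⧸ Submodule.span ℝ (V '' (S : Set ι)) :=
  fun i => Submodule.Quotient.mk (V i.1)

/-- `V|S` is linearly closed in `V`. -/
def LinClosed (V : ι → E) (S : Finset ι) : Prop :=
  ∀ i, V i ∈ Submodule.span ℝ (V '' (S : Set ι)) → i ∈ S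

/-- A codegree* decomposition of `V` of length `m`: a partition of the index set into
parts `S 0, S 1, …, S m` with `codegStar (V|S i) ≥ 1` for `i ≠ 0` and
`codegStar V = ∑_{i=1}^m codegStar (V|S i)`. -/
def IsCodegDecomp (V : ι → E) (m : ℕ) (S : Fin (m + 1) → Finset ι) : Prop :=
  (∀ i j, i ≠ j → Disjoint (S i) (S j)) ∧
  (∀ x, ∃ i, x ∈ S i) ∧
  (∀ i, i ≠ 0 → 1 ≤ codegStar (subfam V (S i))) ∧
  codegStar V = ∑ i ∈ Finset.univ.erase (0 : Fin (m + 1)), codegStar (subfam V (S i))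

/-!
Write `signSum φ V = φ⁺(V) - φ⁻(V)` and fix a functional `φ` maximising it, so that
`signSum φ V = disc V`.

For linearly closed `W`, `disc W + disc (V/W) ≤ disc V`: a lexicographic perturbation
`ψ + ε (ζ + δ χ)` of maximisers `ψ` of `V/W` and `χ` of `W` realises the sum, since on the zero set
of a maximiser every functional takes as many positive as negative values.

Conversely, suppose that `φ'` has the sign of `φ` wherever it does not vanish on `V`, that it
vanishes on `W`, and that every `v` with `φ' v = 0 ≠ φ v` lies in `W`. Splitting the signs of `φ`
over `W` and `V ∖ W` then gives `disc V ≤ disc W + disc (V/W)`. Such `φ'` and `W` exist in every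
rank `s`: if `s` is at most the rank of the zero flat of `φ`, take `φ' = φ` and a rank-`s` subflat
of it; otherwise rotate `φ` towards a generic functional until one more vector becomes a zero, which
raises the rank of the zero flat by exactly one, and repeat.
-/

open Finset Submodule Module Filter Topology

def signSum (φ : E →ₗ[ℝ] ℝ) (V : ι → E) : ℤ :=
  ∑ i, (SignType.sign (φ (V i)) : ℤ)

lemma posCount_sub_negCount (φ : E →ₗ[ℝ] ℝ) (V : ι → E) :
    (posCount φ V : ℤ) - negCount φ V = signSum φ V := by
  simp only [posCount, negCount, signSum, sign_apply, natCast_card_filter, ← sum_sub_distrib]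
  refine sum_congr rfl fun i _ => ?_
  split_ifs <;> first | rfl | linarith

lemma signSum_neg (φ : E →ₗ[ℝ] ℝ) (V : ι → E) : signSum (-φ) V = -signSum φ V := by
  simp [signSum, Left.sign_neg]

lemma bddAbove_discSet (V : ι → E) :
    BddAbove {k | ∃ φ : E →ₗ[ℝ] ℝ, k = ((posCount φ V : ℤ) - (negCount φ V : ℤ)).natAbs} := by
  refine ⟨Fintype.card ι, ?_⟩
  rintro k ⟨φ, rfl⟩
  have hpos : posCount φ V ≤ Fintype.card ι := card_filter_le _ _
  have hneg : negCount φ V ≤ Fintype.card ι := card_filter_le _ _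
  omega

lemma signSum_le_disc (φ : E →ₗ[ℝ] ℝ) (V : ι → E) : signSum φ V ≤ disc V := by
  rw [← posCount_sub_negCount]
  exact Int.le_natAbs.trans (Int.ofNat_le.2 (le_csSup (bddAbove_discSet V) ⟨φ, rfl⟩))

lemma exists_signSum_eq_disc (V : ι → E) : ∃ φ : E →ₗ[ℝ] ℝ, signSum φ V = disc V := by
  obtain ⟨φ, hφ⟩ := Nat.sSup_mem (s := {k | ∃ φ : E →ₗ[ℝ] ℝ,
    k = ((posCount φ V : ℤ) - (negCount φ V : ℤ)).natAbs}) ⟨_, 0, rfl⟩ (bddAbove_discSet V)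
  rw [posCount_sub_negCount] at hφ
  rcases (signSum φ V).natAbs_eq with h | h
  · exact ⟨φ, by rw [disc, hφ, ← h]⟩
  · refine ⟨-φ, ?_⟩
    rw [signSum_neg, disc, hφ]
    omega

lemma eventually_sign_add_mul (a b : ℝ) : ∀ᶠ ε in 𝓝[>] (0 : ℝ),
    SignType.sign (a + ε * b) = if a = 0 then SignType.sign b else SignType.sign a := by
  split_ifs with ha
  · filter_upwards [self_mem_nhdsWithin] with ε hε
    rw [ha, zero_add, sign_mul, sign_pos hε, one_mul]
  · have h : Tendsto (fun ε => a + ε * b) (𝓝[>] 0) (𝓝 a) := by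
      apply tendsto_nhdsWithin_of_tendsto_nhds
      simpa using ((continuous_id.mul continuous_const).const_add a).tendsto (0 : ℝ)
    have := (continuousAt_sign_of_ne_zero ha).tendsto.comp h
    rw [nhds_discrete] at this
    exact tendsto_pure.1 this

lemma eventually_sign_add_smul_apply (ψ χ : E →ₗ[ℝ] ℝ) (V : ι → E) :
    ∀ᶠ ε in 𝓝[>] (0 : ℝ), ∀ i, SignType.sign ((ψ + ε • χ) (V i)) =
      if ψ (V i) = 0 then SignType.sign (χ (V i)) else SignType.sign (ψ (V i)) :=
  eventually_all.2 fun i => by simpa using eventually_sign_add_mul (ψ (V i)) (χ (V i))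

lemma eventually_signSum_add_smul (ψ χ : E →ₗ[ℝ] ℝ) (V : ι → E) :
    ∀ᶠ ε in 𝓝[>] (0 : ℝ), signSum (ψ + ε • χ) V =
      signSum ψ V + ∑ i with ψ (V i) = 0, (SignType.sign (χ (V i)) : ℤ) := by
  filter_upwards [eventually_sign_add_smul_apply ψ χ V] with ε hε
  have hzero : ∑ i with ψ (V i) = 0, (SignType.sign (ψ (V i)) : ℤ) = 0 :=
    sum_eq_zero fun i hi => by simp [(mem_filter.1 hi).2]
  simp only [signSum, hε, apply_ite, sum_ite]
  rw [← sum_filter_add_sum_filter_not univ (fun i => ψ (V i) = 0), hzero]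
  ring

lemma sum_sign_filter_eq_zero_of_signSum_eq_disc {ψ : E →ₗ[ℝ] ℝ} {V : ι → E}
    (hψ : signSum ψ V = disc V) (χ : E →ₗ[ℝ] ℝ) :
    ∑ i with ψ (V i) = 0, (SignType.sign (χ (V i)) : ℤ) = 0 := by
  have key : ∀ χ : E →ₗ[ℝ] ℝ, ∑ i with ψ (V i) = 0, (SignType.sign (χ (V i)) : ℤ) ≤ 0 := by
    intro χ
    obtain ⟨ε, hε⟩ := (eventually_signSum_add_smul ψ χ V).exists
    linarith [signSum_le_disc (ψ + ε • χ) V]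
  refine le_antisymm (key χ) ?_
  simpa [Left.sign_neg] using key (-χ)

lemma sum_subfam {E ι M : Type*} [AddCommMonoid M] (V : ι → E) (S : Finset ι) (g : E → M) :
    ∑ j, g (subfam V S j) = ∑ i ∈ S, g (V i) :=
  (sum_subtype S (fun _ => Iff.rfl) (g ∘ V)).symm

lemma sum_contract {M : Type*} [AddCommMonoid M] (V : ι → E) (S : Finset ι)
    (g : E ⧸ span ℝ (V '' (S : Set ι)) → M) :
    ∑ j, g (contract V S j) = ∑ i ∈ Sᶜ, g (Submodule.Quotient.mk (V i)) :=
  (sum_subtype Sᶜ (fun _ => mem_compl) fun i => g (Submodule.Quotient.mk (V i))).symm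

lemma signSum_eq_signSum_subfam_add (φ : E →ₗ[ℝ] ℝ) (V : ι → E) (S : Finset ι) :
    signSum φ V = signSum φ (subfam V S) + ∑ i ∈ Sᶜ, (SignType.sign (φ (V i)) : ℤ) := by
  rw [signSum, signSum, sum_subfam V S fun x => (SignType.sign (φ x) : ℤ), sum_add_sum_compl]

lemma signSum_comp_mkQ (V : ι → E) (S : Finset ι) (ψ : E ⧸ span ℝ (V '' (S : Set ι)) →ₗ[ℝ] ℝ) :
    signSum (ψ ∘ₗ (span ℝ (V '' (S : Set ι))).mkQ) V = signSum ψ (contract V S) := by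
  rw [signSum_eq_signSum_subfam_add _ V S, signSum, signSum,
    sum_contract V S fun x => (SignType.sign (ψ x) : ℤ), sum_eq_zero fun j _ => ?_, zero_add]
  · rfl
  · have : V j ∈ span ℝ (V '' (S : Set ι)) := subset_span ⟨j, j.2, rfl⟩
    simp [subfam, (Submodule.Quotient.mk_eq_zero _).2 this]

lemma LinClosed.contract_ne_zero {ι : Type*} {V : ι → E} {S : Finset ι} (hS : LinClosed V S)
    (j : {i // i ∉ S}) : contract V S j ≠ 0 :=
  fun h => j.2 (hS j ((Submodule.Quotient.mk_eq_zero _).1 h))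

lemma exists_dual_apply_ne_zero {F κ : Type*} [AddCommGroup F] [Module ℝ F] [Finite κ]
    (w : κ → F) : ∃ ζ : F →ₗ[ℝ] ℝ, ∀ k, w k ≠ 0 → ζ (w k) ≠ 0 := by
  have := Fintype.ofFinite κ
  suffices ∀ s : Finset κ, ∃ ζ : F →ₗ[ℝ] ℝ, ∀ k ∈ s, w k ≠ 0 → ζ (w k) ≠ 0 by
    simpa using this univ
  intro s
  induction s using Finset.induction_on with
  | empty => exact ⟨0, by simp⟩
  | insert a s _ ih =>
    obtain ⟨ζ, hζ⟩ := ih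
    by_cases ha : w a = 0
    · refine ⟨ζ, fun k hk hwk => ?_⟩
      rcases mem_insert.1 hk with rfl | hk
      exacts [absurd ha hwk, hζ k hk hwk]
    obtain ⟨η, hη⟩ : ∃ η : F →ₗ[ℝ] ℝ, η (w a) ≠ 0 := by
      by_contra! h
      exact ha ((Module.forall_dual_apply_eq_zero_iff ℝ (w a)).1 h)
    -- `ζ + c • η` vanishes at `w k` for at most one value of `c` when `η (w k) ≠ 0`
    obtain ⟨c, hc⟩ := Infinite.exists_notMem_finset
      ((insert a s).image fun k => -ζ (w k) / η (w k))
    refine ⟨ζ + c • η, fun k hk hwk hzero => ?_⟩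
    simp only [LinearMap.add_apply, LinearMap.smul_apply, smul_eq_mul] at hzero
    by_cases hηk : η (w k) = 0
    · rcases mem_insert.1 hk with rfl | hk
      · exact hη hηk
      · exact hζ k hk hwk (by simpa [hηk] using hzero)
    · exact hc (mem_image.2 ⟨k, hk, by field_simp; linarith⟩)

lemma disc_subfam_add_disc_contract_le {V : ι → E} {S : Finset ι} (hS : LinClosed V S) :
    disc (subfam V S) + disc (contract V S) ≤ disc V := by
  set π := (span ℝ (V '' (S : Set ι))).mkQ
  have hπS : ∀ i ∈ S, π (V i) = 0 := fun i hi =>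
    (Submodule.Quotient.mk_eq_zero _).2 (subset_span ⟨i, hi, rfl⟩)
  obtain ⟨ψ, hψ⟩ := exists_signSum_eq_disc (contract V S)
  obtain ⟨χ, hχ⟩ := exists_signSum_eq_disc (subfam V S)
  obtain ⟨ζ, hζ⟩ := exists_dual_apply_ne_zero (contract V S)
  obtain ⟨δ, hδ⟩ := (eventually_sign_add_smul_apply (ζ ∘ₗ π) χ V).exists
  obtain ⟨ε, hε⟩ := (eventually_signSum_add_smul (ψ ∘ₗ π) (ζ ∘ₗ π + δ • χ) V).exists
  have hzeroSet : ∑ i with (ψ ∘ₗ π) (V i) = 0, (SignType.sign ((ζ ∘ₗ π + δ • χ) (V i)) : ℤ)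
      = signSum χ (subfam V S) := by
    have h0 := sum_sign_filter_eq_zero_of_signSum_eq_disc hψ ζ
    rw [sum_filter,
      sum_contract V S fun x => if ψ x = 0 then (SignType.sign (ζ x) : ℤ) else 0] at h0
    rw [signSum, sum_subfam V S (fun x => (SignType.sign (χ x) : ℤ)), sum_filter,
      ← sum_add_sum_compl S]
    have hS_part : ∀ i ∈ S, (if (ψ ∘ₗ π) (V i) = 0 then
        (SignType.sign ((ζ ∘ₗ π + δ • χ) (V i)) : ℤ) else 0) = SignType.sign (χ (V i)) := by
      intro i hi
      rw [hδ i]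
      simp [hπS i hi]
    have hSc_part : ∀ i ∈ Sᶜ, (if (ψ ∘ₗ π) (V i) = 0 then
        (SignType.sign ((ζ ∘ₗ π + δ • χ) (V i)) : ℤ) else 0) =
        if ψ (Submodule.Quotient.mk (V i)) = 0 then
          (SignType.sign (ζ (Submodule.Quotient.mk (V i))) : ℤ) else 0 := by
      intro i hi
      have hζi : ζ (Submodule.Quotient.mk (V i)) ≠ 0 :=
        hζ ⟨i, mem_compl.1 hi⟩ (hS.contract_ne_zero _)
      rw [hδ i]
      simp [π, hζi]
    rw [sum_congr rfl hS_part, sum_congr rfl hSc_part, h0, add_zero]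
  have := signSum_le_disc (ψ ∘ₗ π + ε • (ζ ∘ₗ π + δ • χ)) V
  rw [hε, signSum_comp_mkQ, hzeroSet, hψ, hχ] at this
  rw [add_comm]
  exact_mod_cast this

/-- The covector of `φ'` lies below that of `φ` in the face order. -/
def CovectorLE (V : ι → E) (φ' φ : E →ₗ[ℝ] ℝ) : Prop :=
  ∀ i, φ' (V i) ≠ 0 → 0 < φ' (V i) * φ (V i)

namespace CovectorLE

variable {ι : Type*} {V : ι → E} {φ φ' φ'' : E →ₗ[ℝ] ℝ}

lemma refl (V : ι → E) (φ : E →ₗ[ℝ] ℝ) : CovectorLE V φ φ :=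
  fun _ h => mul_self_pos.2 h

lemma apply_eq_zero (h : CovectorLE V φ' φ) {i : ι} (hi : φ (V i) = 0) : φ' (V i) = 0 := by
  by_contra h'
  simpa [hi] using h i h'

lemma trans (h₁ : CovectorLE V φ'' φ') (h₂ : CovectorLE V φ' φ) : CovectorLE V φ'' φ := by
  intro i hi
  have h₁i := h₁ i hi
  have h₂i := h₂ i fun h => by simp [h] at h₁i
  have : 0 < φ'' (V i) * φ (V i) * (φ' (V i) * φ' (V i)) := by nlinarith
  exact pos_of_mul_pos_left this (mul_self_nonneg _)

lemma sign_eq (h : CovectorLE V φ' φ) {i : ι} (hi : φ' (V i) ≠ 0) :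
    SignType.sign (φ' (V i)) = SignType.sign (φ (V i)) := by
  have := h i hi
  rcases lt_or_gt_of_ne hi with h' | h'
  · rw [sign_neg h', sign_neg (neg_of_mul_pos_right this h'.le)]
  · rw [sign_pos h', sign_pos (pos_of_mul_pos_right this h'.le)]

end CovectorLE

def zeroSet (φ : E →ₗ[ℝ] ℝ) (V : ι → E) : Finset ι := univ.filter fun i => φ (V i) = 0

@[simp]
lemma mem_zeroSet {φ : E →ₗ[ℝ] ℝ} {V : ι → E} {i : ι} : i ∈ zeroSet φ V ↔ φ (V i) = 0 := by
  simp [zeroSet]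

def linClosure (V : ι → E) (T : Finset ι) : Finset ι :=
  univ.filter fun i => V i ∈ span ℝ (V '' (T : Set ι))

lemma subset_linClosure (V : ι → E) (T : Finset ι) : T ⊆ linClosure V T :=
  fun i hi => mem_filter.2 ⟨mem_univ i, subset_span ⟨i, hi, rfl⟩⟩

lemma span_image_linClosure (V : ι → E) (T : Finset ι) :
    span ℝ (V '' (linClosure V T : Set ι)) = span ℝ (V '' (T : Set ι)) := by
  refine le_antisymm (span_le.2 ?_) (span_mono (Set.image_mono (subset_linClosure V T)))
  rintro _ ⟨i, hi, rfl⟩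
  exact (mem_filter.1 hi).2

lemma confRank_subfam {ι : Type*} (V : ι → E) (S : Finset ι) :
    confRank (subfam V S) = finrank ℝ (span ℝ (V '' (S : Set ι))) := by
  rw [confRank, Set.image_eq_range]
  rfl

lemma linClosed_linClosure (V : ι → E) (T : Finset ι) : LinClosed V (linClosure V T) := by
  intro i hi
  rw [span_image_linClosure] at hi
  exact mem_filter.2 ⟨mem_univ i, hi⟩

lemma disc_eq_of_covectorLE {V : ι → E} {φ φ' : E →ₗ[ℝ] ℝ} (hφ : signSum φ V = disc V)
    (hle : CovectorLE V φ' φ) {T : Finset ι} (hT : ∀ i ∈ T, φ' (V i) = 0)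
    (hφ'T : ∀ i, φ' (V i) = 0 → φ (V i) ≠ 0 → i ∈ T) :
    disc V = disc (subfam V (linClosure V T)) + disc (contract V (linClosure V T)) := by
  set S := linClosure V T
  refine le_antisymm ?_ (disc_subfam_add_disc_contract_le (linClosed_linClosure V T))
  have hker : span ℝ (V '' (S : Set ι)) ≤ LinearMap.ker φ' := by
    rw [span_image_linClosure, span_le]
    rintro _ ⟨i, hi, rfl⟩
    exact hT i hi
  have hcompl : ∀ i ∈ Sᶜ, (SignType.sign (φ (V i)) : ℤ) = SignType.sign (φ' (V i)) := by
    intro i hi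
    by_cases h : φ' (V i) = 0
    · have : φ (V i) = 0 := by_contra fun h' =>
        mem_compl.1 hi (subset_linClosure V T (hφ'T i h h'))
      simp [h, this]
    · rw [hle.sign_eq h]
  have hcontract : ∑ i ∈ Sᶜ, (SignType.sign (φ' (V i)) : ℤ)
      = signSum ((span ℝ (V '' (S : Set ι))).liftQ φ' hker) (contract V S) := by
    rw [signSum, sum_contract V S fun x => (SignType.sign (_ : ℝ) : ℤ)]
    rfl
  have : (disc V : ℤ) ≤ disc (subfam V S) + disc (contract V S) := by
    rw [← hφ, signSum_eq_signSum_subfam_add φ V S, sum_congr rfl hcompl, hcontract]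
    exact add_le_add (signSum_le_disc _ _) (signSum_le_disc _ _)
  exact_mod_cast this

def zeroSpan (φ : E →ₗ[ℝ] ℝ) (V : ι → E) : Submodule ℝ E := span ℝ (V '' (zeroSet φ V : Set ι))

lemma zeroSpan_le_ker (φ : E →ₗ[ℝ] ℝ) (V : ι → E) : zeroSpan φ V ≤ LinearMap.ker φ := by
  rw [zeroSpan, span_le]
  rintro _ ⟨i, hi, rfl⟩
  exact mem_zeroSet.1 hi

lemma CovectorLE.zeroSpan_le {V : ι → E} {φ φ' : E →ₗ[ℝ] ℝ} (h : CovectorLE V φ' φ) :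
    zeroSpan φ V ≤ zeroSpan φ' V :=
  span_mono (Set.image_mono fun _ hi => mem_zeroSet.2 (h.apply_eq_zero (mem_zeroSet.1 hi)))

lemma zeroSpan_eq_of_forall_eq_zero {φ : E →ₗ[ℝ] ℝ} {V : ι → E} (h : ∀ i, φ (V i) = 0) :
    zeroSpan φ V = span ℝ (Set.range V) := by
  rw [zeroSpan, ← Set.image_univ]
  congr
  ext i
  simp [h i]

lemma mul_sub_pos_of_abs_le {ρ t : ℝ} (hρ : ρ ≠ t) (h : |t| ≤ |ρ|) : 0 < ρ * (ρ - t) := by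
  have : 0 < (ρ - t) ^ 2 := by positivity
  rcases abs_cases ρ with ⟨_, _⟩ | ⟨_, _⟩ <;> rcases abs_cases t with ⟨_, _⟩ | ⟨_, _⟩ <;> nlinarith

lemma mem_sup_span_singleton_of_smul_sub_smul_mem {F : Submodule ℝ E} {a b : ℝ} {v w : E}
    (ha : a ≠ 0) (h : a • w - b • v ∈ F) : w ∈ F ⊔ span ℝ {v} := by
  rw [show w = a⁻¹ • ((a • w - b • v) + b • v) by rw [sub_add_cancel, inv_smul_smul₀ ha]]
  exact smul_mem _ _
    (add_mem (mem_sup_left h) (mem_sup_right (smul_mem _ _ (mem_span_singleton_self _))))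

/-- Rotating `φ` towards a functional `ψ` that is generic modulo `zeroSpan φ V`, until the first
vector of `V` becomes a zero, adds exactly one dimension to the zero span. -/
lemma exists_covectorLE_finrank_zeroSpan_succ_of_generic [FiniteDimensional ℝ E] {V : ι → E}
    {φ ψ : E →ₗ[ℝ] ℝ} (hφ : ∃ i, φ (V i) ≠ 0) (hψ : zeroSpan φ V ≤ LinearMap.ker ψ)
    (hψV : ∀ i, φ (V i) ≠ 0 → ψ (V i) ≠ 0)
    (hψpair : ∀ i j, ψ (φ (V j) • V i - φ (V i) • V j) = 0 →
      φ (V j) • V i - φ (V i) • V j ∈ zeroSpan φ V) :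
    ∃ φ', CovectorLE V φ' φ ∧ finrank ℝ (zeroSpan φ' V) = finrank ℝ (zeroSpan φ V) + 1 := by
  set ρ : ι → ℝ := fun i => φ (V i) / ψ (V i)
  obtain ⟨i₀, hi₀, hmin⟩ := (univ.filter fun i => φ (V i) ≠ 0).exists_min_image (|ρ ·|)
    (by simpa [Finset.Nonempty] using hφ)
  simp only [mem_filter, mem_univ, true_and] at hi₀ hmin
  set φ' := φ - ρ i₀ • ψ
  have hψzero : ∀ i, φ (V i) = 0 → ψ (V i) = 0 := fun i hi =>
    hψ (subset_span ⟨i, mem_zeroSet.2 hi, rfl⟩)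
  have hφρ : ∀ i, φ (V i) ≠ 0 → φ (V i) = ψ (V i) * ρ i := fun i hi => by
    rw [mul_div_cancel₀ _ (hψV i hi)]
  have hφ'ρ : ∀ i, φ (V i) ≠ 0 → φ' (V i) = ψ (V i) * (ρ i - ρ i₀) := fun i hi => by
    simp only [φ', LinearMap.sub_apply, LinearMap.smul_apply, smul_eq_mul]
    rw [hφρ i hi]
    ring
  have hle : CovectorLE V φ' φ := by
    intro i hi
    by_cases hφi : φ (V i) = 0
    · simp [φ', hφi, hψzero i hφi] at hi
    have hρ : ρ i ≠ ρ i₀ := fun h => hi (by rw [hφ'ρ i hφi, h, sub_self, mul_zero])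
    rw [hφ'ρ i hφi, hφρ i hφi]
    have := mul_sub_pos_of_abs_le hρ (hmin i hφi)
    have := mul_self_pos.2 (hψV i hφi)
    nlinarith
  have hspan : zeroSpan φ' V = zeroSpan φ V ⊔ span ℝ {V i₀} := by
    refine le_antisymm (span_le.2 ?_) (sup_le hle.zeroSpan_le ?_)
    · rintro _ ⟨i, hi, rfl⟩
      by_cases hφi : φ (V i) = 0
      · exact mem_sup_left (subset_span ⟨i, mem_zeroSet.2 hφi, rfl⟩)
      have hρ : ρ i = ρ i₀ := by
        have := hφ'ρ i hφi
        rw [mem_zeroSet.1 hi, zero_eq_mul] at this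
        exact sub_eq_zero.1 (this.resolve_left (hψV i hφi))
      have hpair := hψpair i i₀ (by
        simp only [map_sub, map_smul, smul_eq_mul]
        rw [hφρ i hφi, hφρ i₀ hi₀, hρ]
        ring)
      exact mem_sup_span_singleton_of_smul_sub_smul_mem hi₀ hpair
    · rw [span_le, Set.singleton_subset_iff]
      refine subset_span ⟨i₀, mem_zeroSet.2 ?_, rfl⟩
      rw [hφ'ρ i₀ hi₀, sub_self, mul_zero]
  refine ⟨φ', hle, ?_⟩
  rw [hspan, finrank_sup_span_singleton fun h => hi₀ (zeroSpan_le_ker φ V h)]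

lemma exists_covectorLE_finrank_zeroSpan_succ [FiniteDimensional ℝ E] {V : ι → E}
    {φ : E →ₗ[ℝ] ℝ} (hφ : ∃ i, φ (V i) ≠ 0) :
    ∃ φ', CovectorLE V φ' φ ∧ finrank ℝ (zeroSpan φ' V) = finrank ℝ (zeroSpan φ V) + 1 := by
  set π := (zeroSpan φ V).mkQ
  obtain ⟨ζ, hζ⟩ := exists_dual_apply_ne_zero (Sum.elim (fun i => π (V i))
    fun p : ι × ι => π (φ (V p.2) • V p.1 - φ (V p.1) • V p.2))
  refine exists_covectorLE_finrank_zeroSpan_succ_of_generic (ψ := ζ ∘ₗ π) hφ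
    (fun x hx => by simp [π, (Submodule.Quotient.mk_eq_zero _).2 hx]) (fun i hi h => ?_)
    (fun i j h => ?_)
  · refine hζ (Sum.inl i) (fun h' => hi (zeroSpan_le_ker φ V ?_)) h
    exact (Submodule.Quotient.mk_eq_zero _).1 h'
  · by_contra h'
    exact hζ (Sum.inr (i, j)) (fun h'' => h' ((Submodule.Quotient.mk_eq_zero _).1 h'')) h

lemma exists_covectorLE_finrank_zeroSpan_eq [FiniteDimensional ℝ E] {V : ι → E}
    (φ : E →ₗ[ℝ] ℝ) {k : ℕ} (hk : finrank ℝ (zeroSpan φ V) ≤ k) (hkV : k ≤ confRank V) :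
    ∃ φ', CovectorLE V φ' φ ∧ finrank ℝ (zeroSpan φ' V) = k := by
  induction k, hk using Nat.le_induction with
  | base => exact ⟨φ, CovectorLE.refl V φ, rfl⟩
  | succ k _ ih =>
    obtain ⟨φ', hle, hk⟩ := ih (by omega)
    have hφ' : ∃ i, φ' (V i) ≠ 0 := by
      by_contra! h
      rw [zeroSpan_eq_of_forall_eq_zero h] at hk
      exact absurd hkV (by rw [confRank, hk]; omega)
    obtain ⟨φ'', hle', hk'⟩ := exists_covectorLE_finrank_zeroSpan_succ hφ'
    exact ⟨φ'', hle'.trans hle, by rw [hk', hk]⟩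

lemma exists_subset_finrank_span_image_eq {ι : Type*} [FiniteDimensional ℝ E] (V : ι → E)
    (A : Finset ι) {s : ℕ} (hs : s ≤ finrank ℝ (span ℝ (V '' (A : Set ι)))) :
    ∃ T ⊆ A, finrank ℝ (span ℝ (V '' (T : Set ι))) = s := by
  induction A using Finset.induction_on with
  | empty =>
    rw [Finset.coe_empty, Set.image_empty, span_empty, finrank_bot, nonpos_iff_eq_zero] at hs
    exact ⟨∅, subset_rfl, by simp [hs]⟩
  | insert a A _ ih =>
    by_cases hA : s ≤ finrank ℝ (span ℝ (V '' (A : Set ι)))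
    · obtain ⟨T, hTA, hT⟩ := ih hA
      exact ⟨T, hTA.trans (subset_insert a A), hT⟩
    refine ⟨insert a A, subset_rfl, le_antisymm ?_ hs⟩
    have : finrank ℝ (span ℝ (V '' ↑(insert a A))) ≤ finrank ℝ (span ℝ (V '' ↑A)) + 1 := by
      rw [Finset.coe_insert, Set.image_insert_eq, span_insert, add_comm]
      exact (finrank_add_le_finrank_add_finrank _ _).trans
        (add_le_add_left (by simpa using finrank_span_le_card (R := ℝ) ({V a} : Set E)) _)
    omega

theorem exists_extremal_subfam_general {E : Type*} [AddCommGroup E] [Module ℝ E]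
    [FiniteDimensional ℝ E]
    {ι : Type*} [Fintype ι] (V : ι → E) (s : ℕ)
    (hs2 : s ≤ confRank V - 1) :
    ∃ S : Finset ι, confRank (subfam V S) = s ∧
      disc V = disc (subfam V S) + disc (contract V S) := by
  obtain ⟨φ, hφ⟩ := exists_signSum_eq_disc V
  obtain ⟨φ', T, hle, hT, hφ'T, hrank⟩ : ∃ (φ' : E →ₗ[ℝ] ℝ) (T : Finset ι),
      CovectorLE V φ' φ ∧ (∀ i ∈ T, φ' (V i) = 0) ∧ (∀ i, φ' (V i) = 0 → φ (V i) ≠ 0 → i ∈ T) ∧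
      finrank ℝ (span ℝ (V '' (T : Set ι))) = s := by
    rcases le_or_gt s (finrank ℝ (zeroSpan φ V)) with h | h
    · obtain ⟨T, hTZ, hT⟩ := exists_subset_finrank_span_image_eq V (zeroSet φ V) h
      exact ⟨φ, T, CovectorLE.refl V φ, fun i hi => mem_zeroSet.1 (hTZ hi),
        fun i h h' => absurd h h', hT⟩
    · obtain ⟨φ', hle, hrank⟩ := exists_covectorLE_finrank_zeroSpan_eq φ h.le (by omega)
      exact ⟨φ', zeroSet φ' V, hle, fun _ => mem_zeroSet.1, fun _ h _ => mem_zeroSet.2 h, hrank⟩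
  exact ⟨linClosure V T, by rw [confRank_subfam, span_image_linClosure, hrank],
    disc_eq_of_covectorLE hφ hle hT hφ'T⟩

/-- for every `1 ≤ s ≤ r − 1` there is a subfamily `W` of rank `s` with
`disc V = disc W + disc (V/W)`. -/
theorem exists_extremal_subfam {E : Type*} [AddCommGroup E] [Module ℝ E]
    [FiniteDimensional ℝ E] (hE : 1 ≤ Module.finrank ℝ E)
    {ι : Type*} [Fintype ι] (V : ι → E) (s : ℕ)
    (hs1 : 1 ≤ s) (hs2 : s ≤ confRank V - 1) :
    ∃ S : Finset ι, confRank (subfam V S) = s ∧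
      disc V = disc (subfam V S) + disc (contract V S) :=
  exists_extremal_subfam_general V s hs2
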